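/- Let p : Fin N → ℝ be nonnegative with ∑ⱼ pⱼ = 1, let L : Fin N → ℝ, let L_M > 0 with 0 ≤ Lⱼ ≤ L_M for all j, and let 0 < c ≤ 1. Define P₁ = ∑ⱼ pⱼ sin²(π/4 − c/2 + c Lⱼ / L_M). Then |P₁ − (1−c)/2 − (c/L_M) 𝔼[L]| ≤ (2/3)(c/2)³, where 𝔼[L] = ∑ⱼ pⱼ Lⱼ. -/

import Mathlib

/-!
Write `hⱼ = -c/2 + c Lⱼ / L_M`, so that `|hⱼ| ≤ c/2`. By the double angle formula
`sin²(π/4 + h) = 1/2 + sin(2h)/2`, so `sin²(π/4 + h) - 1/2 - h = (sin 2h - 2h)/2`, which the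
cubic Taylor bound `|x - sin x| ≤ |x|³/6` controls by `(2/3)|h|³`. Averaging over `p` turns
`1/2 + hⱼ` into `(1 - c)/2 + (c/L_M) 𝔼[L]` and keeps the error within `(2/3)(c/2)³`.
-/

open Real Finset

lemma sin_sq_pi_div_four_add (h : ℝ) : sin (π / 4 + h) ^ 2 = 1 / 2 + sin (2 * h) / 2 := by
  rw [sin_sq_eq_half_sub, show 2 * (π / 4 + h) = 2 * h + π / 2 by ring, cos_add_pi_div_two]
  ring

lemma abs_sin_sq_pi_div_four_add_sub_le (h : ℝ) :
    |sin (π / 4 + h) ^ 2 - 1 / 2 - h| ≤ 2 / 3 * |h| ^ 3 := by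
  have hsin := abs_sub_sin_le (2 * h)
  rw [abs_sub_comm, abs_mul, abs_two] at hsin
  calc |sin (π / 4 + h) ^ 2 - 1 / 2 - h| = |sin (2 * h) - 2 * h| / 2 := by
        rw [sin_sq_pi_div_four_add, ← abs_two, ← abs_div, abs_two]
        ring_nf
    _ ≤ 2 / 3 * |h| ^ 3 := by linarith

lemma abs_neg_half_add_mul_div_le {c a b : ℝ} (hc : 0 ≤ c) (ha : 0 ≤ a) (hab : a ≤ b) :
    |-c / 2 + c * a / b| ≤ c / 2 := by
  have hq0 : 0 ≤ a / b := div_nonneg ha (ha.trans hab)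
  have hq1 : a / b ≤ 1 := div_le_one_of_le₀ hab (ha.trans hab)
  rw [mul_div_assoc, abs_le]
  constructor <;> nlinarith

lemma abs_sum_mul_le_of_abs_le {ι : Type*} {s : Finset ι} {p f : ι → ℝ} {ε : ℝ}
    (hp : ∀ j ∈ s, 0 ≤ p j) (hsum : ∑ j ∈ s, p j = 1) (hf : ∀ j ∈ s, |f j| ≤ ε) :
    |∑ j ∈ s, p j * f j| ≤ ε :=
  calc |∑ j ∈ s, p j * f j| ≤ ∑ j ∈ s, p j * |f j| := by
        refine (abs_sum_le_sum_abs _ _).trans_eq (sum_congr rfl fun j hj => ?_)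
        rw [abs_mul, abs_of_nonneg (hp j hj)]
    _ ≤ ∑ j ∈ s, p j * ε := sum_le_sum fun j hj => mul_le_mul_of_nonneg_left (hf j hj) (hp j hj)
    _ = ε := by rw [← sum_mul, hsum, one_mul]

theorem expected_loss_encoding_general (N : ℕ) (p : Fin N → ℝ) (hp : ∀ j, 0 ≤ p j)
    (hsum : ∑ j, p j = 1) (L : Fin N → ℝ) (L_M : ℝ)
    (hL : ∀ j, 0 ≤ L j ∧ L j ≤ L_M) (c : ℝ) (hc : 0 < c) :
    |(∑ j, p j * Real.sin (Real.pi / 4 - c / 2 + c * L j / L_M) ^ 2) -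
        (1 - c) / 2 - (c / L_M) * ∑ j, p j * L j| ≤ (2 / 3) * (c / 2) ^ 3 := by
  set h : Fin N → ℝ := fun j => -c / 2 + c * L j / L_M
  have hh : ∀ j, |h j| ≤ c / 2 := fun j => abs_neg_half_add_mul_div_le hc.le (hL j).1 (hL j).2
  have herr : (∑ j, p j * sin (π / 4 - c / 2 + c * L j / L_M) ^ 2) - (1 - c) / 2
      - (c / L_M) * ∑ j, p j * L j = ∑ j, p j * (sin (π / 4 + h j) ^ 2 - 1 / 2 - h j) := by
    have hconst : (1 - c) / 2 = ∑ j, p j * ((1 - c) / 2) := by rw [← sum_mul, hsum, one_mul]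
    rw [hconst, mul_sum, ← sum_sub_distrib, ← sum_sub_distrib]
    refine sum_congr rfl fun j _ => ?_
    simp only [h]
    ring_nf
  rw [herr]
  refine abs_sum_mul_le_of_abs_le (fun j _ => hp j) hsum fun j _ => ?_
  calc |sin (π / 4 + h j) ^ 2 - 1 / 2 - h j| ≤ 2 / 3 * |h j| ^ 3 :=
        abs_sin_sq_pi_div_four_add_sub_le (h j)
    _ ≤ 2 / 3 * (c / 2) ^ 3 := by gcongr; exact hh j

theorem expected_loss_encoding (N : ℕ) (p : Fin N → ℝ) (hp : ∀ j, 0 ≤ p j)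
    (hsum : ∑ j, p j = 1) (L : Fin N → ℝ) (L_M : ℝ) (hLM : 0 < L_M)
    (hL : ∀ j, 0 ≤ L j ∧ L j ≤ L_M) (c : ℝ) (hc : 0 < c) (hc1 : c ≤ 1) :
    |(∑ j, p j * Real.sin (Real.pi / 4 - c / 2 + c * L j / L_M) ^ 2) -
        (1 - c) / 2 - (c / L_M) * ∑ j, p j * L j| ≤ (2 / 3) * (c / 2) ^ 3 :=
  expected_loss_encoding_general N p hp hsum L L_M hL c hc
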